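/- Consider the finite two-player game with action sets {a1, b1} and {a2, b2} and payoffs u1'(a1,a2) = 6, u1'(a1,b2) = 2, u1'(b1,a2) = 4, u1'(b1,b2) = 1, u2(a1,a2) = 0, u2(a1,b2) = 0.5, u2(b1,a2) = 2, u2(b1,b2) = 1.5 (obtained from the game with player-1 payoffs 4.5, 0.5, 4, 1 by changing player 1's cost function to zero). This game has a unique Nash equilibrium in mixed strategies, namely the pure profile (a1, b2), with payoff vector (2, 0.5). In particular, player 1's equilibrium payoff (2) is lower than his equilibrium payoff (2.5) in the game before the change, even though u1'(a,b) ≥ u1(a,b) for every action profile. -/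

import Mathlib

/-- Player 1's actions. -/
inductive P1Act where
  | a1 : P1Act
  | b1 : P1Act
deriving DecidableEq

instance : Fintype P1Act where
  elems := {P1Act.a1, P1Act.b1}
  complete := by intro x; cases x <;> simp

/-- Player 2's actions. -/
inductive P2Act where
  | a2 : P2Act
  | b2 : P2Act
deriving DecidableEq

instance : Fintype P2Act where
  elems := {P2Act.a2, P2Act.b2}
  complete := by intro x; cases x <;> simp

/-- `σ` is a mixed strategy: a probability distribution on the finite action set `A`. -/
def IsMixed {A : Type*} [Fintype A] (σ : A → ℝ) : Prop :=
  (∀ a, 0 ≤ σ a) ∧ ∑ a, σ a = 1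

/-- Expected payoff `U(σ,τ) = Σ_a Σ_b σ(a)·τ(b)·u(a,b)`. -/
def expPayoff {A B : Type*} [Fintype A] [Fintype B]
    (u : A → B → ℝ) (σ : A → ℝ) (τ : B → ℝ) : ℝ :=
  ∑ a, ∑ b, σ a * τ b * u a b

/-- `(σ,τ)` is a mixed-strategy Nash equilibrium of the two-player game `(u1,u2)`. -/
def IsNash {A B : Type*} [Fintype A] [Fintype B]
    (u1 u2 : A → B → ℝ) (σ : A → ℝ) (τ : B → ℝ) : Prop :=
  IsMixed σ ∧ IsMixed τ ∧
    (∀ σ', IsMixed σ' → expPayoff u1 σ' τ ≤ expPayoff u1 σ τ) ∧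
    (∀ τ', IsMixed τ' → expPayoff u2 σ τ' ≤ expPayoff u2 σ τ)

/-- The mixed strategy placing probability one on the pure action `a0`. -/
def pureStrat {A : Type*} [Fintype A] [DecidableEq A] (a0 : A) : A → ℝ :=
  fun a => if a = a0 then 1 else 0

/-- Player 1's payoffs before the change (base game modified by costs
`c1(a1) = -1.5, c1(b1) = 0`). -/
noncomputable def h1 : P1Act → P2Act → ℝ
  | .a1, .a2 => 4.5
  | .a1, .b2 => 0.5
  | .b1, .a2 => 4
  | .b1, .b2 => 1

/-- Player 1's payoffs after changing his cost function to zero. -/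
noncomputable def h1' : P1Act → P2Act → ℝ
  | .a1, .a2 => 6
  | .a1, .b2 => 2
  | .b1, .a2 => 4
  | .b1, .b2 => 1

/-- Player 2's payoffs (unchanged). -/
noncomputable def h2 : P1Act → P2Act → ℝ
  | .a1, .a2 => 0
  | .a1, .b2 => 0.5
  | .b1, .a2 => 2
  | .b1, .b2 => 1.5


lemma sumA (f : P1Act → ℝ) : ∑ a, f a = f .a1 + f .b1 := by
  rw [show (Finset.univ : Finset P1Act) = {P1Act.a1, P1Act.b1} by decide]; simp

lemma sumB (f : P2Act → ℝ) : ∑ b, f b = f .a2 + f .b2 := by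
  rw [show (Finset.univ : Finset P2Act) = {P2Act.a2, P2Act.b2} by decide]; simp

lemma expand1' (σ : P1Act → ℝ) (τ : P2Act → ℝ) :
    expPayoff h1' σ τ = σ .a1 * τ .a2 * 6 + σ .a1 * τ .b2 * 2
      + (σ .b1 * τ .a2 * 4 + σ .b1 * τ .b2 * 1) := by
  simp [expPayoff, sumA, sumB, h1']


/-! Player 1's action `a1` strictly dominates `b1` against every mixed strategy of player 2,
so player 1 plays `a1` in every equilibrium; against `a1`, player 2's unique best reply
is `b2`. -/

section

variable {A B : Type*} [Fintype A] [Fintype B]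

def IsBestResponse (u : A → B → ℝ) (σ : A → ℝ) (τ : B → ℝ) : Prop :=
  ∀ σ', IsMixed σ' → expPayoff u σ' τ ≤ expPayoff u σ τ

theorem expPayoff_flip (u : A → B → ℝ) (σ : A → ℝ) (τ : B → ℝ) :
    expPayoff (flip u) τ σ = expPayoff u σ τ := by
  unfold expPayoff
  rw [Finset.sum_comm]
  simp only [flip, mul_comm (τ _)]

theorem isNash_iff (u1 u2 : A → B → ℝ) (σ : A → ℝ) (τ : B → ℝ) :
    IsNash u1 u2 σ τ ↔
      IsMixed σ ∧ IsMixed τ ∧ IsBestResponse u1 σ τ ∧ IsBestResponse (flip u2) τ σ := by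
  simp only [IsNash, IsBestResponse, expPayoff_flip]

variable [DecidableEq A]

theorem isMixed_pureStrat (a0 : A) : IsMixed (pureStrat a0) :=
  ⟨fun a => by unfold pureStrat; split_ifs <;> norm_num, by simp [pureStrat]⟩

theorem expPayoff_pureStrat_left (u : A → B → ℝ) (a0 : A) (τ : B → ℝ) :
    expPayoff u (pureStrat a0) τ = ∑ b, τ b * u a0 b := by
  simp [expPayoff, pureStrat]

theorem expPayoff_pureStrat_pureStrat [DecidableEq B] (u : A → B → ℝ) (a0 : A) (b0 : B) :
    expPayoff u (pureStrat a0) (pureStrat b0) = u a0 b0 := by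
  simp [expPayoff_pureStrat_left, pureStrat]

theorem expPayoff_eq_sum_mul (u : A → B → ℝ) (σ : A → ℝ) (τ : B → ℝ) :
    expPayoff u σ τ = ∑ a, σ a * expPayoff u (pureStrat a) τ := by
  simp_rw [expPayoff_pureStrat_left, Finset.mul_sum, ← mul_assoc]
  rfl

theorem isBestResponse_pureStrat {u : A → B → ℝ} {τ : B → ℝ} {a0 : A}
    (hdom : ∀ a ≠ a0, expPayoff u (pureStrat a) τ ≤ expPayoff u (pureStrat a0) τ) :
    IsBestResponse u (pureStrat a0) τ := by
  intro σ ⟨hσ0, hσ1⟩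
  calc expPayoff u σ τ = ∑ a, σ a * expPayoff u (pureStrat a) τ := expPayoff_eq_sum_mul ..
    _ ≤ ∑ a, σ a * expPayoff u (pureStrat a0) τ := by
      gcongr with a
      · exact hσ0 a
      · rcases eq_or_ne a a0 with rfl | ha
        exacts [le_rfl, hdom a ha]
    _ = expPayoff u (pureStrat a0) τ := by rw [← Finset.sum_mul, hσ1, one_mul]

theorem IsBestResponse.eq_pureStrat {u : A → B → ℝ} {σ : A → ℝ} {τ : B → ℝ} {a0 : A}
    (hbest : IsBestResponse u σ τ) (hσ : IsMixed σ)
    (hdom : ∀ a ≠ a0, expPayoff u (pureStrat a) τ < expPayoff u (pureStrat a0) τ) :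
    σ = pureStrat a0 := by
  obtain ⟨hσ0, hσ1⟩ := hσ
  set U := fun a => expPayoff u (pureStrat a) τ
  have hterm_nonpos : ∀ a ∈ Finset.univ, σ a * (U a - U a0) ≤ 0 := fun a _ =>
    mul_nonpos_of_nonneg_of_nonpos (hσ0 a) (by
      rcases eq_or_ne a a0 with rfl | ha
      exacts [le_of_eq (sub_self _), sub_nonpos.mpr (hdom a ha).le])
  have hsum_eq : ∑ a, σ a * (U a - U a0) = expPayoff u σ τ - U a0 := by
    simp only [mul_sub, Finset.sum_sub_distrib, ← Finset.sum_mul, hσ1, one_mul,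
      ← expPayoff_eq_sum_mul, U]
  have hsum_zero : ∑ a, σ a * (U a - U a0) = 0 :=
    le_antisymm (Finset.sum_nonpos hterm_nonpos)
      (hsum_eq ▸ sub_nonneg.mpr (hbest _ (isMixed_pureStrat a0)))
  have hoff : ∀ a ≠ a0, σ a = 0 := fun a ha =>
    (mul_eq_zero.mp ((Finset.sum_eq_zero_iff_of_nonpos hterm_nonpos).mp hsum_zero a
      (Finset.mem_univ a))).resolve_right (sub_ne_zero.mpr (hdom a ha).ne)
  have hon : σ a0 = 1 := by
    rwa [← Fintype.sum_eq_single a0 hoff]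
  funext a
  rcases eq_or_ne a a0 with rfl | ha
  · simp [pureStrat, hon]
  · simp [pureStrat, ha, hoff a ha]

end

theorem P1Act.sum_univ (f : P1Act → ℝ) : ∑ a, f a = f .a1 + f .b1 :=
  Fintype.sum_eq_add _ _ (by decide) (by rintro (_ | _) h <;> simp at h)

theorem P2Act.sum_univ (f : P2Act → ℝ) : ∑ b, f b = f .a2 + f .b2 :=
  Fintype.sum_eq_add _ _ (by decide) (by rintro (_ | _) h <;> simp at h)

theorem h1'_a1_strictly_dominant {τ : P2Act → ℝ} (hτ : IsMixed τ) :
    ∀ a ≠ P1Act.a1, expPayoff h1' (pureStrat a) τ < expPayoff h1' (pureStrat .a1) τ := by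
  obtain ⟨hτ0, hτ1⟩ := hτ
  rw [P2Act.sum_univ] at hτ1
  rintro (_ | _) ha
  · exact absurd rfl ha
  · simp only [expPayoff_pureStrat_left, P2Act.sum_univ, h1']
    linarith [hτ0 .a2, hτ0 .b2]

theorem h2_b2_strictly_dominant_against_a1 :
    ∀ b ≠ P2Act.b2,
      expPayoff (flip h2) (pureStrat b) (pureStrat .a1) <
        expPayoff (flip h2) (pureStrat .b2) (pureStrat .a1) := by
  rintro (_ | _) hb
  · simp only [expPayoff_pureStrat_pureStrat, flip, h2]
    norm_num
  · exact absurd rfl hb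

/-- The game `(h1', h2)` has a unique mixed-strategy Nash equilibrium, the pure
profile `(a1, b2)`, with payoff vector `(2, 0.5)`.  In particular, player 1's
equilibrium payoff `2` is lower than his payoff `2.5` in the unique equilibrium of
the game before the change, even though `h1' ≥ h1` pointwise. -/
theorem improved_cost_game_unique_equilibrium :
    (∀ σ : P1Act → ℝ, ∀ τ : P2Act → ℝ, IsNash h1' h2 σ τ ↔
      (σ = pureStrat P1Act.a1 ∧ τ = pureStrat P2Act.b2)) ∧
    expPayoff h1' (pureStrat P1Act.a1) (pureStrat P2Act.b2) = 2 ∧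
    expPayoff h2 (pureStrat P1Act.a1) (pureStrat P2Act.b2) = 0.5 ∧
    (∀ a b, h1 a b ≤ h1' a b) ∧
    expPayoff h1' (pureStrat P1Act.a1) (pureStrat P2Act.b2) <
      expPayoff h1 (fun _ => (1 : ℝ) / 2) (fun _ => (1 : ℝ) / 2) := by
  refine ⟨fun σ τ => ?_, ?_, ?_, ?_, ?_⟩
  · rw [isNash_iff]
    constructor
    · rintro ⟨hσ, hτ, hbest1, hbest2⟩
      obtain rfl := hbest1.eq_pureStrat hσ (h1'_a1_strictly_dominant hτ)
      exact ⟨rfl, hbest2.eq_pureStrat hτ h2_b2_strictly_dominant_against_a1⟩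
    · rintro ⟨rfl, rfl⟩
      exact ⟨isMixed_pureStrat _, isMixed_pureStrat _,
        isBestResponse_pureStrat fun a ha =>
          (h1'_a1_strictly_dominant (isMixed_pureStrat _) a ha).le,
        isBestResponse_pureStrat fun b hb => (h2_b2_strictly_dominant_against_a1 b hb).le⟩
  · simp [expPayoff_pureStrat_pureStrat, h1']
  · simp [expPayoff_pureStrat_pureStrat, h2]
  · rintro (_ | _) (_ | _) <;> norm_num [h1, h1']
  · rw [expPayoff_pureStrat_pureStrat]
    simp only [expPayoff, P1Act.sum_univ, P2Act.sum_univ, h1, h1']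
    norm_num
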